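/- arXiv:2209.05103 — 4 statements merged into one kernel-verified Lean document; each statement's English description precedes it below -/
import Mathlib

section
/- Let J be a small category, let C and D be categories, and suppose D has colimits of shape J. If F, G : C ⥤ D are functors such that F is a retract of G in the functor category (i.e. there are natural transformations i : F ⟶ G and r : G ⟶ F with r ∘ i = id_F), and G preserves colimits of shape J, then F also preserves colimits of shape J. -/
open CategoryTheory CategoryTheory.Limits

universe w u₁ v₁ u₂ v₂

/-!
For a cocone `c` over `K`, the components of `i` and `r` exhibit `F.mapCocone c` as a retract of
the colimit cocone `G.mapCocone c`, over the retract `K ⋙ F` of `K ⋙ G`. A retract of a colimit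
cocone is a colimit cocone: to descend to a cocone `s`, precompose `s` with the retraction of
diagrams, descend along the colimit, and precompose with the section; uniqueness holds because
`i ≫ r = 𝟙`.
-/

namespace CategoryTheory.Limits

variable {J : Type*} [Category J] {C : Type*} [Category C] {D : Type*} [Category D]

def IsColimit.ofRetract {K K' : J ⥤ D} (h : Retract K K') {c : Cocone K} {c' : Cocone K'}
    (hpt : Retract c.pt c'.pt) (hi : ∀ j, c.ι.app j ≫ hpt.i = h.i.app j ≫ c'.ι.app j)
    (hr : ∀ j, c'.ι.app j ≫ hpt.r = h.r.app j ≫ c.ι.app j) (hc' : IsColimit c') :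
    IsColimit c where
  desc s := hpt.i ≫ hc'.desc ((Cocone.precompose h.r).obj s)
  fac s j := by
    have hrj : h.i.app j ≫ h.r.app j = 𝟙 _ := by rw [← NatTrans.comp_app, h.retract]; rfl
    rw [reassoc_of% hi j, hc'.fac, Cocone.precompose_obj_ι, NatTrans.comp_app,
      reassoc_of% hrj]
  uniq s m hm := by
    have hdesc : hpt.r ≫ m = hc'.desc ((Cocone.precompose h.r).obj s) :=
      hc'.uniq ((Cocone.precompose h.r).obj s) (hpt.r ≫ m) fun j => by
        rw [reassoc_of% hr j, hm, Cocone.precompose_obj_ι, NatTrans.comp_app]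
    rw [← hdesc, Retract.retract_assoc]

lemma preservesColimit_of_retract {K : J ⥤ C} {F G : C ⥤ D} (h : Retract F G)
    [PreservesColimit K G] : PreservesColimit K F where
  preserves {c} hc := ⟨IsColimit.ofRetract (c' := G.mapCocone c)
    (h.map ((Functor.whiskeringLeft J C D).obj K))
    (h.map ((evaluation C D).obj c.pt)) (fun j => h.i.naturality (c.ι.app j))
    (fun j => h.r.naturality (c.ι.app j)) (isColimitOfPreserves G hc)⟩

lemma preservesColimitsOfShape_of_retract {F G : C ⥤ D} (h : Retract F G)
    [PreservesColimitsOfShape J G] : PreservesColimitsOfShape J F where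
  preservesColimit := preservesColimit_of_retract h

end CategoryTheory.Limits

theorem stmt_0_general {C : Type u₁} [Category.{v₁} C] {D : Type u₂} [Category.{v₂} D]
    {J : Type w} [SmallCategory J]
    (F G : C ⥤ D) (i : F ⟶ G) (r : G ⟶ F) (hir : i ≫ r = 𝟙 F)
    [PreservesColimitsOfShape J G] :
    PreservesColimitsOfShape J F :=
  preservesColimitsOfShape_of_retract ⟨i, r, hir⟩

/-- If `F` is a retract of `G` in the functor category and `G` preserves colimits of
shape `J`, then so does `F`. -/
theorem stmt_0 {C : Type u₁} [Category.{v₁} C] {D : Type u₂} [Category.{v₂} D]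
    {J : Type w} [SmallCategory J] [HasColimitsOfShape J D]
    (F G : C ⥤ D) (i : F ⟶ G) (r : G ⟶ F) (hir : i ≫ r = 𝟙 F)
    [PreservesColimitsOfShape J G] :
    PreservesColimitsOfShape J F :=
  stmt_0_general F G i r hir
end

section
/- Let C be a category, W a class of morphisms of C, and let L : C ⥤ D be a localization of C at W. If L admits a right adjoint G, then G is fully faithful, and an object X of C lies in the essential image of G if and only if X is W-local, i.e. for every morphism w : a ⟶ b in W the induced map Hom(b, X) ⟶ Hom(a, X) is a bijection. -/
/-!
Precomposition with `L` is fully faithful on functor categories, so the counit of the whiskered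
adjunction `(G ⋙ ·) ⊣ (L ⋙ ·)` is invertible; evaluated at `𝟭 D` it is the counit of `L ⊣ G`,
hence `G` is fully faithful. A presheaf `Hom(·, Z)` inverting `W` factors through `L`, so
`W`-local objects are exactly the objects local for every morphism inverted by `L`. Since `G` is
a fully faithful right adjoint, those morphisms are exactly the ones local for the image of `G`,
and an object `X` local for them has its unit `X ⟶ G (L X)` local between two local objects,
hence invertible.
-/

open CategoryTheory

universe v₁ u₁ v₂ u₂

namespace CategoryTheory.Adjunction

variable {C D : Type*} [Category* C] [Category* D]

lemma essImage_eq_isLocal_isLocal_range {L : C ⥤ D} {G : D ⥤ C} (adj : L ⊣ G) [G.Full]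
    [G.Faithful] : G.essImage = (ObjectProperty.isLocal (· ∈ Set.range G.obj)).isLocal := by
  set P : ObjectProperty C := (· ∈ Set.range G.obj)
  have hG : G.essImage ≤ P.isLocal.isLocal := by
    rintro X ⟨Y, ⟨e⟩⟩
    exact P.isLocal.isLocal.prop_of_iso e (P.le_isLocal_isLocal _ ⟨Y, rfl⟩)
  refine le_antisymm hG fun X hX ↦ ?_
  have hunit : P.isLocal.isLocal.isLocal (adj.unit.app X) :=
    P.isLocal.le_isLocal_isLocal _ (ObjectProperty.isLocal_adj_unit_app adj X)
  have := (ObjectProperty.isLocal_iff_isIso _ _ hX (hG _ ⟨L.obj X, ⟨Iso.refl _⟩⟩)).1 hunit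
  exact adj.mem_essImage_of_unit_isIso X

end CategoryTheory.Adjunction

namespace CategoryTheory.Localization

variable {C D E : Type*} [Category* C] [Category* D] [Category* E]

lemma isIso_map_of_isInvertedBy (W : MorphismProperty C) (L : C ⥤ D) [L.IsLocalization W]
    (F : C ⥤ E) (hF : W.IsInvertedBy F) {X Y : C} (f : X ⟶ Y) [IsIso (L.map f)] :
    IsIso (F.map f) :=
  (NatIso.isIso_map_iff (fac F hF L) f).1 (inferInstanceAs (IsIso ((lift F hF L).map (L.map f))))

lemma isLocal_eq_isLocal_inverseImage_isomorphisms (W : MorphismProperty C) (L : C ⥤ D)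
    [L.IsLocalization W] :
    W.isLocal = ((MorphismProperty.isomorphisms D).inverseImage L).isLocal := by
  refine le_antisymm (fun Z hZ X Y f (_ : IsIso (L.map f)) ↦ ?_)
    (MorphismProperty.isLocal_antitone (inverts L W))
  have hyoneda : W.op.IsInvertedBy (yoneda.obj Z) := fun _ _ w hw ↦
    (isIso_iff_bijective _).2 (hZ w.unop hw)
  have : IsIso (L.op.map f.op) := inferInstanceAs (IsIso (L.map f).op)
  exact (isIso_iff_bijective _).1 (isIso_map_of_isInvertedBy W.op L.op _ hyoneda f.op)

lemma isIso_counit_of_adjunction (W : MorphismProperty C) (L : C ⥤ D) [L.IsLocalization W]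
    {G : D ⥤ C} (adj : L ⊣ G) : IsIso adj.counit := by
  have := full_whiskeringLeft L W D
  have := faithful_whiskeringLeft L W D
  have (Y : D) : IsIso (adj.counit.app Y) := by
    simpa using NatIso.isIso_app_of_isIso ((adj.whiskerLeft (C := D)).counit.app (𝟭 D)) Y
  exact NatIso.isIso_of_isIso_app _

lemma essImage_eq_isLocal_of_adjunction (W : MorphismProperty C) (L : C ⥤ D)
    [L.IsLocalization W] {G : D ⥤ C} (adj : L ⊣ G) [G.Full] [G.Faithful] :
    G.essImage = W.isLocal := by
  rw [adj.essImage_eq_isLocal_isLocal_range,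
    ObjectProperty.isLocal_eq_inverseImage_isomorphisms adj,
    isLocal_eq_isLocal_inverseImage_isomorphisms W L]

end CategoryTheory.Localization

/-- If `L : C ⥤ D` is a localization of `C` at `W` admitting a right adjoint `G`, then
`G` is fully faithful and an object `X` of `C` lies in the essential image of `G` if and
only if `X` is `W`-local, i.e. every `w : a ⟶ b` in `W` induces a bijection
`Hom(b, X) ⟶ Hom(a, X)`. -/
theorem stmt_10 {C : Type u₁} [Category.{v₁} C] {D : Type u₂} [Category.{v₂} D]
    (W : MorphismProperty C) (L : C ⥤ D) [L.IsLocalization W]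
    (G : D ⥤ C) (adj : L ⊣ G) :
    G.Full ∧ G.Faithful ∧
      ∀ X : C, G.essImage X ↔
        ∀ ⦃a b : C⦄ (w : a ⟶ b), W w →
          Function.Bijective (fun g : b ⟶ X => w ≫ g) := by
  have := Localization.isIso_counit_of_adjunction W L adj
  have hG := adj.fullyFaithfulROfIsIsoCounit
  have := hG.full
  have := hG.faithful
  refine ⟨hG.full, hG.faithful, fun X ↦ ?_⟩
  rw [Localization.essImage_eq_isLocal_of_adjunction W L adj, MorphismProperty.isLocal_iff]
end

section
/- Let C be a small category. A functor F : PSh(C)ᵒᵖ ⥤ Type is representable if and only if F preserves all small limits (equivalently, F sends colimits in PSh(C) to limits in Type). -/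
open CategoryTheory CategoryTheory.Limits Opposite

universe v u

/-!
Representable functors send colimits to limits. Conversely, if `F` preserves limits then
`F.rightOp : PSh(C) ⥤ Typeᵒᵖ` preserves colimits, so it is a left adjoint because `PSh(C)` is the
free cocompletion of `C`. If `R` is its right adjoint, then
`F P ≅ (PUnit ⟶ F P) ≅ (F.rightOp P ⟶ op PUnit) ≅ (P ⟶ R (op PUnit))`,
so `F` is represented by `R (op PUnit)`.
-/

namespace CategoryTheory.Functor

variable {D : Type u} [Category.{v} D]

def representableByOfAdjunctionRightOp (F : Dᵒᵖ ⥤ Type v) {R : (Type v)ᵒᵖ ⥤ D}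
    (adj : F.rightOp ⊣ R) : F.RepresentableBy (R.obj (op PUnit)) where
  homEquiv {X} := (adj.homEquiv X (op PUnit)).symm.trans
    ((opEquiv _ _).trans CorepresentableBy.id.homEquiv)
  homEquiv_comp f g := by
    simp [adj.homEquiv_naturality_left_symm, opEquiv]

lemma isRepresentable_of_isLeftAdjoint_rightOp (F : Dᵒᵖ ⥤ Type v) [F.rightOp.IsLeftAdjoint] :
    F.IsRepresentable :=
  (representableByOfAdjunctionRightOp F (Adjunction.ofIsLeftAdjoint F.rightOp)).isRepresentable

lemma isLeftAdjoint_rightOp_of_preservesLimits {C : Type u} [SmallCategory C]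
    (F : (Cᵒᵖ ⥤ Type u)ᵒᵖ ⥤ Type u) [PreservesLimitsOfSize.{u, u} F] :
    F.rightOp.IsLeftAdjoint :=
  have := preservesColimitsOfSize_rightOp F
  Presheaf.isLeftAdjoint_of_preservesColimits.{u, u, u} F.rightOp

end CategoryTheory.Functor

/-- A functor `F : PSh(C)ᵒᵖ ⥤ Type` on the presheaf category of a small category `C` is
representable if and only if it preserves all small limits. -/
theorem stmt_14 {C : Type u} [SmallCategory C] (F : (Cᵒᵖ ⥤ Type u)ᵒᵖ ⥤ Type u) :
    F.IsRepresentable ↔ PreservesLimitsOfSize.{u, u} F := by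
  refine ⟨fun _ => inferInstance, fun _ => ?_⟩
  have := F.isLeftAdjoint_rightOp_of_preservesLimits
  exact F.isRepresentable_of_isLeftAdjoint_rightOp
end

section
/- Let κ be an uncountable regular cardinal. A simplicial set X is a κ-presentable object of the category of simplicial sets (i.e. Hom(X, −) preserves κ-filtered colimits) if and only if for every n ≥ 0 the set X_n of n-simplices has cardinality < κ. -/
/-!
If every `X_n` is `κ`-small, the category of elements of `X` has fewer than `κ` arrows (`κ` is
regular and uncountable, and `Δ` has countably many arrows), and `X` is the colimit over it of
representables. Representables are `κ`-presentable, and so is any colimit of `κ`-presentable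
objects indexed by a category with fewer than `κ` arrows.

Conversely, evaluation at `[n]` has the right adjoint `S ↦ ([m] ↦ S ^ Hom([m], [n]))`, which
preserves `κ`-filtered colimits because the hom-sets of `Δ` are finite. A left adjoint whose right
adjoint is `κ`-accessible preserves `κ`-presentable objects, so `X_n` is a `κ`-presentable set,
i.e. a set of cardinality `< κ`.
-/

open CategoryTheory CategoryTheory.Limits Opposite

universe u

/-- A category `J` is `κ`-filtered if every diagram indexed by a `κ`-small category
(i.e. a category with fewer than `κ` morphisms) admits a cocone. -/
def IsCardinalFiltered (J : Type u) [SmallCategory J] (κ : Cardinal.{u}) : Prop :=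
  ∀ (K : Type u) [SmallCategory K], Cardinal.mk (Σ (a : K) (b : K), a ⟶ b) < κ →
    ∀ F : K ⥤ J, Nonempty (Cocone F)

universe v w

lemma isCardinalFiltered_iff_isCardinalFiltered (J : Type u) [SmallCategory J] (κ : Cardinal.{u})
    [Fact κ.IsRegular] :
    _root_.IsCardinalFiltered J κ ↔ CategoryTheory.IsCardinalFiltered J κ := by
  have hA (A : Type u) [SmallCategory A] :
      Cardinal.mk (Σ (a : A) (b : A), a ⟶ b) < κ ↔ HasCardinalLT (Arrow A) κ := by
    rw [hasCardinalLT_iff_of_equiv (Arrow.equivSigma A), hasCardinalLT_iff_cardinal_mk_lt]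
  exact ⟨fun h ↦ ⟨fun F hF ↦ h _ ((hA _).2 hF) F⟩,
    fun h A _ hA' F ↦ h.nonempty_cocone F ((hA A).1 hA')⟩

lemma forall_isCardinalFiltered_preservesColimitsOfShape_iff {C : Type w} [Category.{v} C]
    (X : C) (κ : Cardinal.{u}) [Fact κ.IsRegular] :
    (∀ (J : Type u) [SmallCategory J], _root_.IsCardinalFiltered J κ →
        PreservesColimitsOfShape J (coyoneda.obj (op X))) ↔ IsCardinalPresentable X κ := by
  simp only [isCardinalFiltered_iff_isCardinalFiltered]
  exact ⟨fun h ↦ ⟨fun J _ hJ ↦ h J hJ⟩,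
    fun _ J _ _ ↦ preservesColimitsOfShape_of_isCardinalPresentable X κ J⟩

lemma hasCardinalLT_of_countable (X : Type u) [Countable X] {κ : Cardinal.{v}}
    (hκ : Cardinal.aleph0 < κ) : HasCardinalLT X κ :=
  (Cardinal.lift_le_aleph0.2 Cardinal.mk_le_aleph0).trans_lt (Cardinal.aleph0_lt_lift.2 hκ)

noncomputable def piConstIsoULiftHom (T : Type v) (d : Type (max u v)) :
    (∏ᶜ fun _ : T ↦ d) ≅ (ULift.{u} T ⟶ d) where
  hom := TypeCat.ofHom fun x ↦ TypeCat.ofHom fun g ↦ Pi.π (fun _ ↦ d) g.down x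
  inv := Pi.lift fun g ↦ TypeCat.ofHom fun h : ULift T ⟶ d ↦ h ⟨g⟩
  hom_inv_id := Pi.hom_ext _ _ fun g ↦ by ext; simp
  inv_hom_id := by ext h ⟨g⟩; simp

lemma piConstIsoULiftHom_hom_naturality (T : Type v) {d d' : Type (max u v)} (f : d ⟶ d') :
    (Pi.lift fun g ↦ Pi.π (fun _ : T ↦ d) g ≫ f) ≫ (piConstIsoULiftHom T d').hom =
      (piConstIsoULiftHom T d).hom ≫ (coyoneda.obj (op (ULift.{u} T))).map f := by
  ext x ⟨g⟩
  simp [piConstIsoULiftHom]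

section

variable {C : Type v} [SmallCategory C]

noncomputable def evaluationRightAdjointCompEvaluationIso (c t : C) :
    evaluationRightAdjoint (C := C) (Type (max u v)) c ⋙ (evaluation C (Type (max u v))).obj t ≅
      coyoneda.obj (op (ULift.{u} (t ⟶ c))) :=
  NatIso.ofComponents (piConstIsoULiftHom (t ⟶ c)) (piConstIsoULiftHom_hom_naturality _)

lemma isCardinalAccessible_evaluationRightAdjoint (κ : Cardinal.{max u v}) [Fact κ.IsRegular]
    (c : C) (hC : ∀ t : C, HasCardinalLT (t ⟶ c) κ) :
    (evaluationRightAdjoint (C := C) (Type (max u v)) c).IsCardinalAccessible κ where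
  preservesColimitOfShape J _ _ := by
    refine preservesColimitsOfShape_of_evaluation _ _ fun t ↦ ?_
    have : IsCardinalPresentable (ULift.{u} (t ⟶ c)) κ :=
      HasCardinalLT.isCardinalPresentable ((hasCardinalLT_ulift_iff _ _).2 (hC t))
    have := preservesColimitsOfShape_of_isCardinalPresentable (ULift.{u} (t ⟶ c)) κ J
    exact preservesColimitsOfShape_of_natIso (evaluationRightAdjointCompEvaluationIso.{u} c t).symm

lemma hasCardinalLT_obj_of_isCardinalPresentable (κ : Cardinal.{max u v}) [Fact κ.IsRegular]
    (hC : ∀ t c : C, HasCardinalLT (t ⟶ c) κ)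
    (P : C ⥤ Type (max u v)) [IsCardinalPresentable P κ] (c : C) :
    HasCardinalLT (P.obj c) κ := by
  have := isCardinalAccessible_evaluationRightAdjoint κ c (hC · c)
  rw [← Types.isCardinalPresentable_iff]
  exact (evaluationAdjunctionLeft _ c).isCardinalPresentable_leftAdjoint_obj κ P

lemma hasCardinalLT_arrow_elements {κ : Cardinal.{w}} [Fact κ.IsRegular] (P : C ⥤ Type u)
    (hC : ∀ c c' : C, HasCardinalLT (c ⟶ c') κ) (hP : HasCardinalLT P.Elements κ) :
    HasCardinalLT (Arrow P.Elements) κ := by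
  rw [hasCardinalLT_iff_of_equiv (Arrow.equivSigma _)]
  have hP' : HasCardinalLT (Σ x y : P.Elements, x.1 ⟶ y.1) κ :=
    hasCardinalLT_sigma _ κ hP fun x ↦ hasCardinalLT_sigma _ κ hP fun y ↦ hC x.1 y.1
  exact hP'.of_injective
    (Sigma.map id fun _ ↦ Sigma.map id fun _ f ↦ f.1)
    (Function.injective_id.sigma_map fun _ ↦
      Function.injective_id.sigma_map fun _ ↦ Subtype.val_injective)

lemma isCardinalPresentable_of_hasCardinalLT_elements (κ : Cardinal.{max u v}) [Fact κ.IsRegular]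
    (P : Cᵒᵖ ⥤ Type (max u v)) (hC : ∀ c c' : C, HasCardinalLT (c ⟶ c') κ)
    (hP : HasCardinalLT P.Elements κ) :
    IsCardinalPresentable P κ := by
  have (x : P.Elementsᵒᵖ) :
      IsCardinalPresentable ((Presheaf.functorToRepresentables P).obj x) κ :=
    inferInstanceAs (IsCardinalPresentable (uliftYoneda.{u}.obj x.unop.1.unop) κ)
  exact isCardinalPresentable_of_isColimit _ (Presheaf.colimitOfRepresentable.{u} P) κ
    ((hasCardinalLT_arrow_op_iff _ _).2 (hasCardinalLT_arrow_elements P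
      (fun c c' ↦ (hasCardinalLT_iff_of_equiv (opEquiv c c') κ).2 (hC _ _)) hP))

end

instance : Countable SimplexCategory :=
  Function.Injective.countable (f := SimplexCategory.len) fun _ _ ↦ SimplexCategory.ext

instance : Countable SimplexCategoryᵒᵖ :=
  Countable.of_equiv _ equivToOpposite

/-- For an uncountable regular cardinal `κ`, a simplicial set `X` is `κ`-presentable
(i.e. `Hom(X, -)` preserves `κ`-filtered colimits) if and only if for every `n ≥ 0` the
set `X_n` of `n`-simplices has cardinality `< κ`. -/
theorem stmt_15 (κ : Cardinal.{u}) (hκ : κ.IsRegular) (huncountable : Cardinal.aleph0 < κ)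
    (X : SSet.{u}) :
    (∀ (J : Type u) [SmallCategory J], IsCardinalFiltered J κ →
        PreservesColimitsOfShape J (coyoneda.obj (op X))) ↔
      ∀ n : ℕ, Cardinal.mk (X.obj (op (SimplexCategory.mk n))) < κ := by
  have : Fact κ.IsRegular := ⟨hκ⟩
  have hom_lt (a b : SimplexCategory) : HasCardinalLT (a ⟶ b) κ :=
    hasCardinalLT_of_countable _ huncountable
  rw [forall_isCardinalFiltered_preservesColimitsOfShape_iff]
  refine ⟨fun _ n ↦ ?_, fun hX ↦ ?_⟩
  · rw [← hasCardinalLT_iff_cardinal_mk_lt]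
    exact hasCardinalLT_obj_of_isCardinalPresentable κ
      (fun a b ↦ (hasCardinalLT_iff_of_equiv (opEquiv a b) κ).2 (hom_lt _ _)) X _
  · refine isCardinalPresentable_of_hasCardinalLT_elements κ X hom_lt
      (hasCardinalLT_sigma _ κ (hasCardinalLT_of_countable _ huncountable)
        fun n ↦ (hasCardinalLT_iff_cardinal_mk_lt _ _).2 (hX n.unop.len))
end
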